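/- arXiv:0802.1135 — 2 statements merged into one kernel-verified Lean document; each statement's English description precedes it below -/
import Mathlib

section
/- Let $X$ be a complex normed space, $n \ge 1$, and let $P : X \to \mathbb{C}$ be a continuous $n$-homogeneous polynomial with associated symmetric $n$-linear form $\check P$ (so $P(x) = \check P(x,\dots,x)$). Let $\eta : [0,\infty) \to (0,\infty)$ be decreasing with $\eta(s)\eta(t) \le C\,\eta(s+t)$ for all $s,t \ge 0$ with $C \ge 1$, and set $v(x) = \eta(\|x\|)$. Then $\sup_{x_1,\dots,x_n} |\check P(x_1,\dots,x_n)|\, v(x_1)\cdots v(x_n) \le \frac{C^{n}}{n!}\, \sup_x v(x)|P(x)|$. -/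
/-!
Summing over all sign vectors `ε ∈ {±1}ⁿ`, polarization gives
`2ⁿ n! A(x) = ∑_ε (∏ εᵢ) P(∑ εⱼ xⱼ)`. Since `‖∑ εⱼ xⱼ‖ ≤ ∑ ‖xⱼ‖` and `η` is decreasing, iterating
`η(s) η(t) ≤ C η(s + t)` yields `∏ v(xᵢ) ≤ Cⁿ⁻¹ v(∑ εⱼ xⱼ)`, so each of the `2ⁿ` terms, weighted by
`∏ v(xᵢ)`, is at most `Cⁿ⁻¹ ‖P‖_v`.
-/

open Finset

theorem Int.sum_units_prod_mul_prod_comp {ι : Type*} [Fintype ι] [DecidableEq ι] (f : ι → ι) :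
    ∑ ε : ι → ℤˣ, (((∏ i, ε i) * ∏ i, ε (f i) : ℤˣ) : ℤ) =
      if f.Bijective then 2 ^ Fintype.card ι else 0 := by
  split_ifs with hf
  · have hterm (ε : ι → ℤˣ) : (∏ i, ε i) * ∏ i, ε (f i) = 1 := by
      rw [show ∏ i, ε (f i) = ∏ i, ε i from Equiv.prod_comp (.ofBijective f hf) ε,
        Int.units_mul_self]
    simp [hterm, Fintype.card_units_int]
  · obtain ⟨j, hj⟩ : ∃ j, ∀ i, f i ≠ j := by
      simpa [Function.Surjective] using mt Finite.surjective_iff_bijective.mp hf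
    -- flipping the sign `ε j` at a point outside the range of `f` negates the summand
    refine sum_involution (fun ε _ => Function.update ε j (-ε j)) (fun ε _ => ?_)
      (fun ε _ _ => by simpa [funext_iff] using ⟨j, by simp⟩)
      (fun _ _ => mem_univ _) (fun ε _ => by simp)
    have hfix : ∏ i, Function.update ε j (-ε j) (f i) = ∏ i, ε (f i) := by
      simp [Function.update_of_ne (hj _)]
    rw [hfix, prod_update_of_mem (mem_univ j),
      prod_eq_mul_prod_sdiff_singleton j ε fun h => absurd (mem_univ j) h]
    push_cast
    ring

namespace MultilinearMap

variable {ι M : Type*} [Fintype ι] [DecidableEq ι] [AddCommGroup M]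

theorem polarization {N : Type*} [AddCommGroup N] (A : MultilinearMap ℤ (fun _ : ι => M) N)
    (hA : ∀ (σ : Equiv.Perm ι) (x : ι → M), A (x ∘ σ) = A x) (x : ι → M) :
    ∑ ε : ι → ℤˣ, (∏ i, ε i) • A (fun _ => ∑ j, ε j • x j) =
      (2 ^ Fintype.card ι * (Fintype.card ι).factorial) • A x := by
  have hexpand (ε : ι → ℤˣ) :
      A (fun _ => ∑ j, ε j • x j) = ∑ f : ι → ι, (∏ i, ε (f i)) • A (x ∘ f) := by
    rw [A.map_sum]
    refine sum_congr rfl fun f _ => ?_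
    simpa [Units.smul_def] using A.map_smul_univ (fun i => (ε (f i) : ℤ)) (x ∘ f)
  calc ∑ ε : ι → ℤˣ, (∏ i, ε i) • A (fun _ => ∑ j, ε j • x j)
      = ∑ f : ι → ι, ∑ ε : ι → ℤˣ, ((∏ i, ε i) * ∏ i, ε (f i)) • A (x ∘ f) := by
        simp only [hexpand, smul_sum, smul_smul]
        exact sum_comm
    _ = ∑ f : ι → ι, (if f.Bijective then 2 ^ Fintype.card ι else 0 : ℤ) • A (x ∘ f) := by
        simp only [Units.smul_def, ← sum_smul, Int.sum_units_prod_mul_prod_comp]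
    _ = ∑ _σ : Equiv.Perm ι, (2 ^ Fintype.card ι : ℤ) • A x := by
        refine (Fintype.sum_of_injective _ DFunLike.coe_injective _ _ (fun f hf => ?_)
          fun σ => ?_).symm
        · rw [if_neg fun hbij => hf ⟨.ofBijective f hbij, rfl⟩, zero_smul]
        · rw [if_pos σ.bijective, hA]
    _ = (2 ^ Fintype.card ι * (Fintype.card ι).factorial) • A x := by
        rw [sum_const, card_univ, Fintype.card_perm, ← natCast_zsmul, ← natCast_zsmul, smul_smul]
        push_cast
        ring_nf

theorem polarization_norm_le {F : Type*} [NormedAddCommGroup F] [NormedSpace ℝ F]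
    (A : MultilinearMap ℤ (fun _ : ι => M) F)
    (hA : ∀ (σ : Equiv.Perm ι) (x : ι → M), A (x ∘ σ) = A x) (x : ι → M) :
    (2 ^ Fintype.card ι * (Fintype.card ι).factorial : ℝ) * ‖A x‖ ≤
      ∑ ε : ι → ℤˣ, ‖A (fun _ => ∑ j, ε j • x j)‖ := by
  calc (2 ^ Fintype.card ι * (Fintype.card ι).factorial : ℝ) * ‖A x‖
      = ‖∑ ε : ι → ℤˣ, (∏ i, ε i) • A (fun _ => ∑ j, ε j • x j)‖ := by
        rw [A.polarization hA, RCLike.norm_nsmul ℝ, nsmul_eq_mul]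
        push_cast
        ring
    _ ≤ ∑ ε : ι → ℤˣ, ‖A (fun _ => ∑ j, ε j • x j)‖ := by
        exact (norm_sum_le _ _).trans_eq (sum_congr rfl fun ε _ => norm_units_zsmul _ _)

end MultilinearMap

section Weight

variable {η : ℝ → ℝ} {C : ℝ}

theorem Finset.prod_le_pow_card_sub_one_mul_sum {ι : Type*} (hC : 0 ≤ C)
    (hη : ∀ t, 0 ≤ t → 0 ≤ η t) (hsub : ∀ s t, 0 ≤ s → 0 ≤ t → η s * η t ≤ C * η (s + t))
    {s : Finset ι} (hs : s.Nonempty) {t : ι → ℝ} (ht : ∀ i ∈ s, 0 ≤ t i) :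
    ∏ i ∈ s, η (t i) ≤ C ^ (#s - 1) * η (∑ i ∈ s, t i) := by
  induction hs using Finset.Nonempty.cons_induction with
  | singleton a => simp
  | cons a s ha hs ih =>
    have ht' : ∀ i ∈ s, 0 ≤ t i := fun i hi => ht i (mem_cons_of_mem hi)
    rw [prod_cons, sum_cons, card_cons, Nat.add_sub_cancel, ← pow_sub_one_mul hs.card_ne_zero]
    calc η (t a) * ∏ i ∈ s, η (t i)
        ≤ η (t a) * (C ^ (#s - 1) * η (∑ i ∈ s, t i)) := by
          gcongr
          · exact hη _ (ht a (mem_cons_self a s))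
          · exact ih ht'
      _ = C ^ (#s - 1) * (η (t a) * η (∑ i ∈ s, t i)) := by ring
      _ ≤ C ^ (#s - 1) * (C * η (t a + ∑ i ∈ s, t i)) :=
          mul_le_mul_of_nonneg_left (hsub _ _ (ht a (mem_cons_self a s)) (sum_nonneg ht'))
            (pow_nonneg hC _)
      _ = C ^ (#s - 1) * C * η (t a + ∑ i ∈ s, t i) := by ring

theorem prod_le_pow_mul_sum_units_smul {E ι : Type*} [SeminormedAddCommGroup E] [Fintype ι]
    [Nonempty ι] (hC : 0 ≤ C) (hη : ∀ t, 0 ≤ t → 0 ≤ η t)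
    (hdec : ∀ s t, 0 ≤ s → s ≤ t → η t ≤ η s)
    (hsub : ∀ s t, 0 ≤ s → 0 ≤ t → η s * η t ≤ C * η (s + t)) (x : ι → E) (ε : ι → ℤˣ) :
    ∏ i, η ‖x i‖ ≤ C ^ (Fintype.card ι - 1) * η ‖∑ j, ε j • x j‖ := by
  have hnorm : ‖∑ j, ε j • x j‖ ≤ ∑ j, ‖x j‖ :=
    (norm_sum_le _ _).trans_eq (sum_congr rfl fun j _ => norm_units_zsmul _ _)
  calc ∏ i, η ‖x i‖ ≤ C ^ (Fintype.card ι - 1) * η (∑ i, ‖x i‖) :=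
        prod_le_pow_card_sub_one_mul_sum hC hη hsub univ_nonempty fun i _ => norm_nonneg _
    _ ≤ C ^ (Fintype.card ι - 1) * η ‖∑ j, ε j • x j‖ := by
        gcongr
        exact hdec _ _ (norm_nonneg _) hnorm

end Weight

theorem stmt6 {X : Type*} [NormedAddCommGroup X] [NormedSpace ℂ X] (n : ℕ) (hn : 1 ≤ n)
    (A : ContinuousMultilinearMap ℂ (fun _ : Fin n => X) ℂ)
    (hsym : ∀ (σ : Equiv.Perm (Fin n)) (x : Fin n → X), A (x ∘ σ) = A x)
    (P : X → ℂ) (hP : ∀ x, P x = A (fun _ => x))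
    (η : ℝ → ℝ) (C : ℝ) (hC : 1 ≤ C) (hpos : ∀ t, 0 ≤ t → 0 < η t)
    (hdec : ∀ s t, 0 ≤ s → s ≤ t → η t ≤ η s)
    (hsub : ∀ s t, 0 ≤ s → 0 ≤ t → η s * η t ≤ C * η (s + t))
    (v : X → ℝ) (hv : ∀ x, v x = η ‖x‖)
    (hbdd : BddAbove {r : ℝ | ∃ x : X, r = v x * ‖P x‖}) :
    sSup {r : ℝ | ∃ x : Fin n → X, r = ‖A x‖ * ∏ i, v (x i)} ≤
      C ^ n / (n.factorial : ℝ) * sSup {r : ℝ | ∃ x : X, r = v x * ‖P x‖} := by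
  obtain rfl : v = fun x => η ‖x‖ := funext hv
  have : Nonempty (Fin n) := ⟨⟨0, hn⟩⟩
  set M := sSup {r : ℝ | ∃ x : X, r = η ‖x‖ * ‖P x‖}
  have hM (y : X) : η ‖y‖ * ‖P y‖ ≤ M := le_csSup hbdd ⟨y, rfl⟩
  have hη (t : ℝ) (ht : 0 ≤ t) : 0 ≤ η t := (hpos t ht).le
  refine csSup_le ⟨_, 0, rfl⟩ ?_
  rintro _ ⟨x, rfl⟩
  have hterm (ε : Fin n → ℤˣ) : ‖P (∑ j, ε j • x j)‖ * ∏ i, η ‖x i‖ ≤ C ^ n * M := by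
    have hweight := prod_le_pow_mul_sum_units_smul (zero_le_one.trans hC) hη hdec hsub x ε
    rw [Fintype.card_fin] at hweight
    set y := ∑ j, ε j • x j
    calc ‖P y‖ * ∏ i, η ‖x i‖ ≤ ‖P y‖ * (C ^ (n - 1) * η ‖y‖) := by gcongr
      _ = C ^ (n - 1) * (η ‖y‖ * ‖P y‖) := by ring
      _ ≤ C ^ n * M := mul_le_mul (pow_le_pow_right₀ hC (n.sub_le 1)) (hM y)
          (mul_nonneg (hη _ (norm_nonneg y)) (norm_nonneg _)) (by positivity)
  have hpol : (2 ^ n * n.factorial : ℝ) * ‖A x‖ ≤ ∑ ε : Fin n → ℤˣ, ‖P (∑ j, ε j • x j)‖ := by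
    simpa [hP] using (A.toMultilinearMap.restrictScalars ℤ).polarization_norm_le hsym x
  have hprod : 0 ≤ ∏ i, η ‖x i‖ := prod_nonneg fun i _ => hη _ (norm_nonneg _)
  rw [div_mul_eq_mul_div, le_div_iff₀ (by positivity)]
  refine le_of_mul_le_mul_left ?_ (by positivity : (0 : ℝ) < 2 ^ n)
  calc 2 ^ n * ((‖A x‖ * ∏ i, η ‖x i‖) * n.factorial)
      = (2 ^ n * n.factorial : ℝ) * ‖A x‖ * ∏ i, η ‖x i‖ := by ring
    _ ≤ (∑ ε : Fin n → ℤˣ, ‖P (∑ j, ε j • x j)‖) * ∏ i, η ‖x i‖ := by gcongr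
    _ ≤ ∑ _ε : Fin n → ℤˣ, C ^ n * M := by
        rw [sum_mul]
        exact sum_le_sum fun ε _ => hterm ε
    _ = 2 ^ n * (C ^ n * M) := by simp [Fintype.card_units_int]
end

section
/- Let $\eta : [0,\infty) \to (0,\infty)$ be continuous, decreasing, with $\lim_{t\to\infty} t^k \eta(t) = 0$ for all $k$. Suppose there exist $m \in \mathbb{N}$ and $C > 0$ such that $\eta(t/2) \le C\,\eta(t)^{1/m}$ for all $t \ge 0$. Then there exist positive constants $a, b, \alpha$ such that $\eta(t) \ge a\,e^{-b t^{\alpha}}$ for all $t \ge 0$. -/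
/-- Auxiliary exponent sequence: `S18 m n = m + m^2 + ... + m^(n+1)`. -/
def S18 (m : ℕ) : ℕ → ℕ
  | 0 => m
  | n + 1 => m + m * S18 m n

lemma S18_le (m : ℕ) (hm : 1 ≤ m) : ∀ n, S18 m n ≤ (2 * m) ^ (n + 1) := by
  intro n
  induction n with
  | zero => simp [S18]; omega
  | succ n ih =>
    have h1 : 1 ≤ (2 * m) ^ (n + 1) := Nat.one_le_pow _ _ (by omega)
    have : S18 m (n + 1) = m + m * S18 m n := rfl
    have h2 : m * S18 m n ≤ m * (2 * m) ^ (n + 1) := Nat.mul_le_mul_left _ ih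
    have h3 : (2 * m) ^ (n + 2) = 2 * m * (2 * m) ^ (n + 1) := by ring
    have h4 : m ≤ m * (2 * m) ^ (n + 1) := Nat.le_mul_of_pos_right _ (by omega)
    calc S18 m (n + 1) = m + m * S18 m n := rfl
      _ ≤ m * (2 * m) ^ (n + 1) + m * (2 * m) ^ (n + 1) := Nat.add_le_add h4 h2
      _ = (2 * m) ^ (n + 1 + 1) := by ring

lemma two_mul_le_two_pow18 : ∀ m : ℕ, 2 * m ≤ 2 ^ m ∨ m = 0 ∨ True → 1 ≤ m → 2 * m ≤ 2 ^ m := by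
  intro m _ hm
  induction m with
  | zero => omega
  | succ k ihk =>
    rcases Nat.eq_zero_or_pos k with hk | hk
    · subst hk; norm_num
    · have hik := ihk (Or.inr (Or.inr trivial)) hk
      have h2k : 2 ≤ 2 ^ k := by
        calc 2 = 2 ^ 1 := rfl
          _ ≤ 2 ^ k := Nat.pow_le_pow_right (by norm_num) hk
      have hsum : 2 ^ (k + 1) = 2 ^ k + 2 ^ k := by ring
      omega

theorem stmt18 (η : ℝ → ℝ) (hcont : ContinuousOn η (Set.Ici 0))
    (hpos : ∀ t, 0 ≤ t → 0 < η t)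
    (hdec : ∀ s t, 0 ≤ s → s ≤ t → η t ≤ η s)
    (hlim : ∀ j : ℕ, Filter.Tendsto (fun t => t ^ j * η t) Filter.atTop (nhds 0))
    (m : ℕ) (hm : 1 ≤ m) (C : ℝ) (hC : 0 < C)
    (h : ∀ t, 0 ≤ t → η (t / 2) ≤ C * η t ^ ((1 : ℝ) / m)) :
    ∃ a > 0, ∃ b > 0, ∃ α > 0, ∀ t, 0 ≤ t → a * Real.exp (-(b * t ^ α)) ≤ η t := by
  have hm0 : (m : ℝ) ≠ 0 := by positivity
  set K : ℝ := max C 1 with hKdef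
  have hK1 : (1 : ℝ) ≤ K := le_max_right _ _
  have hCK : C ≤ K := le_max_left _ _
  have hK0 : (0 : ℝ) < K := lt_of_lt_of_le one_pos hK1
  set q : ℝ := min (η 2) K⁻¹ with hqdef
  have hq0 : 0 < q := lt_min (hpos 2 (by norm_num)) (inv_pos.mpr hK0)
  have hq1 : q ≤ 1 := le_trans (min_le_right _ _) (by rw [inv_le_one₀ hK0]; exact hK1)
  have hqC : q ≤ C⁻¹ := le_trans (min_le_right _ _) (inv_anti₀ hC hCK)
  -- key iteration inequality
  have key : ∀ s : ℝ, 0 ≤ s → (η s / C) ^ m ≤ η (2 * s) := by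
    intro s hs
    have h2s : (0 : ℝ) ≤ 2 * s := by linarith
    have h1 := h (2 * s) h2s
    rw [show (2 * s) / 2 = s by ring] at h1
    have hη2s : 0 < η (2 * s) := hpos _ h2s
    have h2 : η s / C ≤ η (2 * s) ^ ((1 : ℝ) / m) := (div_le_iff₀ hC).mpr (by linarith [h1])
    have h3 : (η s / C) ^ m ≤ (η (2 * s) ^ ((1 : ℝ) / m)) ^ m :=
      pow_le_pow_left₀ (div_nonneg (hpos s hs).le hC.le) h2 m
    calc (η s / C) ^ m ≤ (η (2 * s) ^ ((1 : ℝ) / m)) ^ m := h3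
      _ = η (2 * s) := by
        rw [← Real.rpow_natCast (η (2 * s) ^ ((1 : ℝ) / m)) m,
          ← Real.rpow_mul hη2s.le]
        rw [one_div_mul_cancel hm0, Real.rpow_one]
  -- main induction on dyadic scales
  have main : ∀ n : ℕ, ∀ s : ℝ, (2 : ℝ) ^ n ≤ s → s ≤ 2 ^ (n + 1) →
      q ^ (S18 m n) ≤ η s := by
    intro n
    induction n with
    | zero =>
      intro s hs1 hs2
      simp only [pow_zero] at hs1
      have : η 2 ≤ η s := hdec s 2 (by linarith) (by norm_num at hs2 ⊢; linarith)
      have hq2 : q ≤ η 2 := min_le_left _ _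
      calc q ^ (S18 m 0) = q ^ m := rfl
        _ ≤ q ^ 1 := pow_le_pow_of_le_one hq0.le hq1 hm
        _ = q := pow_one q
        _ ≤ η 2 := hq2
        _ ≤ η s := this
    | succ n ih =>
      intro s hs1 hs2
      have hpow : (0 : ℝ) < 2 ^ (n + 1) := by positivity
      have hs0 : 0 ≤ s / 2 := by nlinarith
      have hd1 : (2 : ℝ) ^ n ≤ s / 2 := by
        rw [le_div_iff₀ (by norm_num : (0:ℝ) < 2)]
        calc (2:ℝ) ^ n * 2 = 2 ^ (n + 1) := by ring
          _ ≤ s := hs1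
      have hd2 : s / 2 ≤ 2 ^ (n + 1) := by
        rw [div_le_iff₀ (by norm_num : (0:ℝ) < 2)]
        calc s ≤ 2 ^ (n + 2) := hs2
          _ = 2 ^ (n + 1) * 2 := by ring
      have ihh := ih (s / 2) hd1 hd2
      have hkey := key (s / 2) hs0
      rw [show 2 * (s / 2) = s by ring] at hkey
      have hmul : q * q ^ (S18 m n) ≤ η (s / 2) / C := by
        rw [div_eq_inv_mul]
        exact mul_le_mul hqC ihh (by positivity) (by positivity)
      calc q ^ (S18 m (n + 1)) = q ^ (m + m * S18 m n) := rfl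
        _ = (q * q ^ (S18 m n)) ^ m := by rw [mul_pow, ← pow_mul, ← pow_add]; congr 1; ring
        _ ≤ (η (s / 2) / C) ^ m := pow_le_pow_left₀ (by positivity) hmul m
        _ ≤ η s := hkey
  -- constants
  set L : ℝ := -Real.log q with hLdef
  have hL0 : 0 ≤ L := by
    have := Real.log_nonpos hq0.le hq1
    simp [hLdef]; linarith
  have h2m : (2 * m : ℕ) ≤ 2 ^ m := two_mul_le_two_pow18 m (Or.inr (Or.inr trivial)) hm
  have h2mR : ((2 * m : ℕ) : ℝ) ≤ (2 : ℝ) ^ m := by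
    have : ((2 * m : ℕ) : ℝ) ≤ ((2 ^ m : ℕ) : ℝ) := by exact_mod_cast h2m
    calc ((2 * m : ℕ) : ℝ) ≤ ((2 ^ m : ℕ) : ℝ) := this
      _ = (2 : ℝ) ^ m := by push_cast; ring
  have hBL : (0:ℝ) ≤ (2:ℝ) ^ m * L := by positivity
  have hb : (0:ℝ) < (2:ℝ) ^ m * L + 1 := by linarith
  refine ⟨q, hq0, (2:ℝ) ^ m * L + 1, hb, m, hm, ?_⟩
  intro t ht
  have htα : (0 : ℝ) ≤ t ^ m := by positivity
  by_cases ht2 : t ≤ 2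
  · have hη2 : η 2 ≤ η t := hdec t 2 ht ht2
    have hexp : Real.exp (-(((2:ℝ) ^ m * L + 1) * t ^ m)) ≤ 1 := by
      rw [Real.exp_le_one_iff]
      have : (0:ℝ) ≤ ((2:ℝ) ^ m * L + 1) * t ^ m := mul_nonneg (by linarith) htα
      linarith
    calc q * Real.exp (-(((2:ℝ) ^ m * L + 1) * t ^ m)) ≤ q * 1 :=
          mul_le_mul_of_nonneg_left hexp hq0.le
      _ = q := mul_one q
      _ ≤ η 2 := min_le_left _ _
      _ ≤ η t := hη2
  · push_neg at ht2
    set n : ℕ := Nat.log 2 ⌊t⌋₊ with hndef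
    have hfl1 : 1 ≤ ⌊t⌋₊ := Nat.le_floor (by push_cast; linarith)
    have hn1 : (2 : ℝ) ^ n ≤ t := by
      have h1 : 2 ^ n ≤ ⌊t⌋₊ := Nat.pow_log_le_self 2 (by omega)
      have h2 : (⌊t⌋₊ : ℝ) ≤ t := Nat.floor_le ht
      calc (2 : ℝ) ^ n = ((2 ^ n : ℕ) : ℝ) := by push_cast; ring
        _ ≤ (⌊t⌋₊ : ℝ) := by exact_mod_cast h1
        _ ≤ t := h2
    have hmain := main n t hn1 (by
      have h1 : ⌊t⌋₊ < 2 ^ (n + 1) := Nat.lt_pow_succ_log_self (by norm_num) _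
      have h2 : t < (⌊t⌋₊ : ℝ) + 1 := Nat.lt_floor_add_one t
      have h3 : (⌊t⌋₊ : ℝ) + 1 ≤ ((2 ^ (n + 1) : ℕ) : ℝ) := by exact_mod_cast h1
      calc t ≤ (⌊t⌋₊ : ℝ) + 1 := h2.le
        _ ≤ ((2 ^ (n + 1) : ℕ) : ℝ) := h3
        _ = 2 ^ (n + 1) := by push_cast; ring)
    have hSle : q ^ ((2 * m) ^ (n + 1)) ≤ q ^ (S18 m n) :=
      pow_le_pow_of_le_one hq0.le hq1 (S18_le m hm n)
    have hqexp : ∀ N : ℕ, q ^ N = Real.exp (-(L * N)) := by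
      intro N
      rw [hLdef, neg_mul, neg_neg, mul_comm, Real.exp_nat_mul, Real.exp_log hq0]
    have hbound : ((2 * m : ℕ) : ℝ) ^ (n + 1) ≤ (2:ℝ) ^ m * t ^ m := by
      calc ((2 * m : ℕ) : ℝ) ^ (n + 1) ≤ ((2:ℝ) ^ m) ^ (n + 1) :=
            pow_le_pow_left₀ (by positivity) h2mR _
        _ = ((2:ℝ) ^ (n + 1)) ^ m := by rw [← pow_mul, ← pow_mul, mul_comm]
        _ ≤ ((2:ℝ) * t) ^ m := by
            apply pow_le_pow_left₀ (by positivity)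
            rw [pow_succ]
            linarith
        _ = (2:ℝ) ^ m * t ^ m := mul_pow 2 t m
    have hexp2 : Real.exp (-(((2:ℝ) ^ m * L + 1) * t ^ m)) ≤
        Real.exp (-(L * ((2 * m : ℕ) : ℝ) ^ (n + 1))) := by
      apply Real.exp_le_exp.mpr
      have h1 : L * ((2 * m : ℕ) : ℝ) ^ (n + 1) ≤ L * ((2:ℝ) ^ m * t ^ m) :=
        mul_le_mul_of_nonneg_left hbound hL0
      nlinarith
    have hcast : (((2 * m) ^ (n + 1) : ℕ) : ℝ) = ((2 * m : ℕ) : ℝ) ^ (n + 1) := by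
      push_cast; ring
    calc q * Real.exp (-(((2:ℝ) ^ m * L + 1) * t ^ m))
        ≤ 1 * Real.exp (-(L * ((2 * m : ℕ) : ℝ) ^ (n + 1))) :=
          mul_le_mul hq1 hexp2 (Real.exp_pos _).le one_pos.le
      _ = Real.exp (-(L * (((2 * m) ^ (n + 1) : ℕ) : ℝ))) := by rw [one_mul, hcast]
      _ = q ^ ((2 * m) ^ (n + 1)) := (hqexp _).symm
      _ ≤ q ^ (S18 m n) := hSle
      _ ≤ η t := hmain
end
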